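/- If 2k < n ≤ 3k, then for any (n,k)-generator G and each i ∈ {1,2,3}, the number of members of G of size at least i is at least constr^i(n,k); in particular |G| ≥ constr(n,k). -/

import Mathlib

/-!
An `(n,k)`-generator contains every singleton. If `X` has more than `m k` points, some part of a
partition of `X` into at most `k` members has more than `m` points; removing one of its points
and iterating gives `#X ≤ #{g ⊆ X : |g| > m} + m k`, the bound for members of size `≥ 3` when
`m = 2`.

For members of size `≥ 2` the key fact is that when `#X > 2k`, some point of `X` lies on three
members of size `≥ 2` inside `X`, which gives `3 #X ≤ #{g ⊆ X : |g| ≥ 2} + 5k` in the same way.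
Otherwise these members form a hypergraph `A` of maximum degree two. Let `K` be a largest union
of components of `A` made of pairs. The members outside `K` have a transversal `H` with
`2 #H ≤ #X - #K`, and a partition of `X \ H` into members of `G` uses members of `A` only inside
`K`, i.e. pairs, so it has at least `#X / 2 > k` parts.

The transversal comes from a cover theorem: members of size `≥ 2` of maximum degree two, no
union of components of which is an odd cycle of pairs, have a transversal of at most half the
points. By induction on the number of points: delete a point of degree `≤ 1` together with a
neighbour; contract a pair `{u, v}` and its neighbours `a ∋ u`, `b ∋ v` into the single member
`(a ∪ b) \ {u, v}`; and when all members have at least three points, pick points on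
intersecting members greedily.
-/

/-- A family `G` of nonempty subsets of `[n]` is an `(n,k)`-generator if every nonempty
subset of `[n]` is a disjoint union of at most `k` members of `G`. -/
def IsGenerator (n k : ℕ) (G : Finset (Finset (Fin n))) : Prop :=
  (∀ g ∈ G, g.Nonempty) ∧
  ∀ X : Finset (Fin n), X.Nonempty →
    ∃ S : Finset (Finset (Fin n)), S ⊆ G ∧ S.card ≤ k ∧
      (S : Set (Finset (Fin n))).Pairwise Disjoint ∧ X = S.sup id

open Finset

namespace SetFamily

variable {α : Type*} [DecidableEq α]

def degree (A : Finset (Finset α)) (z : α) : ℕ := #{a ∈ A | z ∈ a}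

section Degree

variable {A B R : Finset (Finset α)} {a b c t : Finset α} {z : α}

lemma degree_mono (h : A ⊆ B) (z : α) : degree A z ≤ degree B z :=
  card_le_card (filter_subset_filter _ h)

lemma degree_pos (ha : a ∈ A) (hz : z ∈ a) : 0 < degree A z :=
  card_pos.2 ⟨a, mem_filter.2 ⟨ha, hz⟩⟩

lemma exists_mem_of_degree_pos (h : 0 < degree A z) : ∃ a ∈ A, z ∈ a := by
  obtain ⟨a, ha⟩ := card_pos.1 h
  exact ⟨a, (mem_filter.1 ha).1, (mem_filter.1 ha).2⟩

lemma degree_eq_zero (h : ∀ a ∈ A, z ∉ a) : degree A z = 0 :=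
  card_eq_zero.2 (filter_eq_empty_iff.2 h)

lemma two_le_degree (ha : a ∈ A) (hb : b ∈ A) (hab : a ≠ b) (hza : z ∈ a) (hzb : z ∈ b) :
    2 ≤ degree A z :=
  one_lt_card.2 ⟨a, mem_filter.2 ⟨ha, hza⟩, b, mem_filter.2 ⟨hb, hzb⟩, hab⟩

lemma eq_or_eq_of_degree_le_two (hz : degree A z ≤ 2) (ha : a ∈ A) (hb : b ∈ A) (hab : a ≠ b)
    (hza : z ∈ a) (hzb : z ∈ b) (ht : t ∈ A) (hzt : z ∈ t) : t = a ∨ t = b := by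
  by_contra! h
  have hsub : {t, a, b} ⊆ {s ∈ A | z ∈ s} := by
    simp only [insert_subset_iff, singleton_subset_iff, mem_filter]
    exact ⟨⟨ht, hzt⟩, ⟨ha, hza⟩, hb, hzb⟩
  have := card_le_card hsub
  rw [card_insert_of_notMem (by simp [h.1, h.2]), card_pair hab] at this
  exact absurd hz (by unfold degree; omega)

lemma exists_ne_mem_of_two_le_degree (hz : 2 ≤ degree A z) (a : Finset α) :
    ∃ b ∈ A, b ≠ a ∧ z ∈ b := by
  obtain ⟨b, hb, hba⟩ := exists_mem_ne hz a
  exact ⟨b, (mem_filter.1 hb).1, hba, (mem_filter.1 hb).2⟩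

lemma mem_of_degree_le (hAB : A ⊆ B) (h : degree B z ≤ degree A z) (hb : b ∈ B) (hz : z ∈ b) :
    b ∈ A := by
  have := eq_of_subset_of_card_le (filter_subset_filter _ hAB) h
  exact (mem_filter.1 (this ▸ mem_filter.2 ⟨hb, hz⟩ : b ∈ {s ∈ A | z ∈ s})).1

lemma degree_insert_le (c : Finset α) (B : Finset (Finset α)) (z : α) :
    degree (insert c B) z ≤ degree B z + 1 := by
  unfold degree
  rw [filter_insert]
  split_ifs
  · exact card_insert_le _ _
  · omega

lemma degree_insert_of_notMem (B : Finset (Finset α)) (hz : z ∉ c) :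
    degree (insert c B) z = degree B z := by
  unfold degree
  rw [filter_insert, if_neg hz]

lemma degree_sdiff_lt (ha : a ∈ A) (haR : a ∈ R) (hz : z ∈ a) : degree (A \ R) z < degree A z :=
  card_lt_card ((ssubset_iff_of_subset (filter_subset_filter _ sdiff_subset)).2
    ⟨a, mem_filter.2 ⟨ha, hz⟩, fun h => (mem_sdiff.1 (mem_filter.1 h).1).2 haR⟩)

end Degree

/-- `K` is a union of connected components of `A` all of whose members are pairs. -/
def IsPairBlock (A : Finset (Finset α)) (K : Finset α) : Prop :=
  ∀ a ∈ A, (a ∩ K).Nonempty → a ⊆ K ∧ #a = 2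

/-- Viewed as edges, the pairs of `A` meeting `K` form a 2-regular graph on `K`, i.e. disjoint
cycles, of odd total length. -/
structure IsOddPairCycle (A : Finset (Finset α)) (K : Finset α) : Prop where
  isPairBlock : IsPairBlock A K
  degree_eq : ∀ z ∈ K, degree A z = 2
  odd_card : Odd #K

structure IsAdmissible (X : Finset α) (A : Finset (Finset α)) : Prop where
  subset : ∀ a ∈ A, a ⊆ X
  two_le_card : ∀ a ∈ A, 2 ≤ #a
  degree_le : ∀ z, degree A z ≤ 2
  not_isOddPairCycle : ∀ K, ¬ IsOddPairCycle A K

def HasSmallTransversal (X : Finset α) (A : Finset (Finset α)) : Prop :=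
  ∃ H ⊆ X, (∀ a ∈ A, (a ∩ H).Nonempty) ∧ 2 * #H ≤ #X

variable (α) in
def HasSmallTransversalBelow (n : ℕ) : Prop :=
  ∀ (Y : Finset α) (B : Finset (Finset α)), #Y < n → IsAdmissible Y B → HasSmallTransversal Y B

variable {X : Finset α} {A : Finset (Finset α)}

lemma IsPairBlock.union {K L : Finset α} (hK : IsPairBlock A K) (hL : IsPairBlock A L) :
    IsPairBlock A (K ∪ L) := by
  intro a ha hmeet
  rw [inter_union_distrib_left] at hmeet
  rcases union_nonempty.1 hmeet with h | h
  · exact (hK a ha h).imp_left fun h => h.trans subset_union_left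
  · exact (hL a ha h).imp_left fun h => h.trans subset_union_right

lemma IsOddPairCycle.of_filter {p : Finset α → Prop} [DecidablePred p] {K : Finset α}
    (hK : IsOddPairCycle {a ∈ A | p a} K) (hdeg : ∀ z, degree A z ≤ 2) : IsOddPairCycle A K := by
  have hsub : {a ∈ A | p a} ⊆ A := filter_subset _ _
  have hmem : ∀ a ∈ A, (a ∩ K).Nonempty → a ∈ {a ∈ A | p a} := by
    rintro a ha ⟨z, hz⟩
    rw [mem_inter] at hz
    exact mem_of_degree_le hsub ((hdeg z).trans (hK.degree_eq z hz.2).ge) ha hz.1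
  exact ⟨fun a ha h => hK.isPairBlock a (hmem a ha h) h,
    fun z hz => le_antisymm (hdeg z) ((hK.degree_eq z hz).symm.le.trans (degree_mono hsub z)),
    hK.odd_card⟩

lemma IsAdmissible.restrict (h : IsAdmissible X A) (Y : Finset α) :
    IsAdmissible Y {a ∈ A | a ⊆ Y} where
  subset _ ha := (mem_filter.1 ha).2
  two_le_card a ha := h.two_le_card a (mem_filter.1 ha).1
  degree_le z := (degree_mono (filter_subset _ _) z).trans (h.degree_le z)
  not_isOddPairCycle K hK := h.not_isOddPairCycle K (hK.of_filter h.degree_le)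

lemma IsAdmissible.hasSmallTransversal_of_delete (h : IsAdmissible X A)
    (ih : HasSmallTransversalBelow α #X) {S T : Finset α} (hSX : S ⊆ X) (hS : S.Nonempty)
    (hTX : T ⊆ X) (hST : ∀ a ∈ A, (a ∩ S).Nonempty → (a ∩ T).Nonempty) (hcard : 2 * #T ≤ #S) :
    HasSmallTransversal X A := by
  obtain ⟨H, hHX, hHA, hHcard⟩ :=
    ih _ _ (card_lt_card (sdiff_ssubset hSX hS)) (h.restrict (X \ S))
  refine ⟨H ∪ T, union_subset (hHX.trans sdiff_subset) hTX, fun a ha => ?_, ?_⟩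
  · by_cases haS : a ⊆ X \ S
    · exact (hHA a (mem_filter.2 ⟨ha, haS⟩)).mono (inter_subset_inter_left subset_union_left)
    obtain ⟨z, hza, hzS⟩ := not_subset.1 haS
    have hzS : z ∈ S := by
      by_contra hz
      exact hzS (mem_sdiff.2 ⟨h.subset a ha hza, hz⟩)
    exact (hST a ha ⟨z, mem_inter.2 ⟨hza, hzS⟩⟩).mono (inter_subset_inter_left subset_union_right)
  · have := card_union_le H T
    have := card_sdiff_of_subset hSX
    have := card_le_card hSX
    omega

lemma IsAdmissible.hasSmallTransversal_of_forall_mem (h : IsAdmissible X A)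
    (ih : HasSmallTransversalBelow α #X) {y z : α} (hy : y ∈ X) (hz : z ∈ X) (hyz : y ≠ z)
    (hzy : ∀ a ∈ A, z ∈ a → y ∈ a) : HasSmallTransversal X A := by
  refine h.hasSmallTransversal_of_delete ih (S := {y, z}) (T := {y}) ?_ (insert_nonempty _ _)
    (singleton_subset_iff.2 hy) ?_ (by rw [card_pair hyz, card_singleton])
  · simp [insert_subset_iff, hy, hz]
  · rintro a ha ⟨w, hw⟩
    simp only [mem_inter, mem_insert, mem_singleton] at hw
    obtain ⟨hwa, rfl | rfl⟩ := hw
    · exact ⟨w, by simpa using hwa⟩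
    · exact ⟨y, by simpa using hzy a ha hwa⟩

lemma IsAdmissible.hasSmallTransversal_of_degree_lt_two (h : IsAdmissible X A)
    (ih : HasSmallTransversalBelow α #X) {z : α} (hz : z ∈ X) (hdeg : degree A z < 2) :
    HasSmallTransversal X A := by
  obtain h0 | h1 : degree A z = 0 ∨ degree A z = 1 := by omega
  · refine h.hasSmallTransversal_of_delete ih (singleton_subset_iff.2 hz) (singleton_nonempty z)
      (empty_subset X) (fun a ha ⟨w, hw⟩ => ?_) (by simp)
    obtain ⟨hwa, rfl⟩ : w ∈ a ∧ w = z := by simpa using hw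
    exact absurd h0 (degree_pos ha hwa).ne'
  · obtain ⟨s, hs⟩ := card_eq_one.1 h1
    have hsz : s ∈ A ∧ z ∈ s := mem_filter.1 (hs ▸ mem_singleton_self s)
    obtain ⟨y, hys, hyz⟩ := exists_mem_ne (h.two_le_card s hsz.1) z
    refine h.hasSmallTransversal_of_forall_mem ih (h.subset s hsz.1 hys) hz hyz fun a ha hza => ?_
    have : a ∈ ({s} : Finset (Finset α)) := hs ▸ mem_filter.2 ⟨ha, hza⟩
    exact mem_singleton.1 this ▸ hys

lemma exists_transversal_insert {A' : Finset (Finset α)} (hA' : A' ⊆ A) {p : α}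
    (hp : p ∈ A.sup id) (hpA : ∀ a ∈ A, a ∉ A' → p ∈ a)
    (hgain : 6 + (∑ a ∈ A', #a + #(A'.sup id)) ≤ ∑ a ∈ A, #a + #(A.sup id))
    (ih : ∃ H ⊆ A'.sup id, (∀ a ∈ A', (a ∩ H).Nonempty) ∧
      6 * #H ≤ ∑ a ∈ A', #a + #(A'.sup id)) :
    ∃ H ⊆ A.sup id, (∀ a ∈ A, (a ∩ H).Nonempty) ∧ 6 * #H ≤ ∑ a ∈ A, #a + #(A.sup id) := by
  obtain ⟨H, hHsup, hHA, hHcard⟩ := ih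
  refine ⟨insert p H, insert_subset hp (hHsup.trans (sup_mono hA')), fun a ha => ?_, ?_⟩
  · by_cases haA' : a ∈ A'
    · exact (hHA a haA').mono (inter_subset_inter_left (subset_insert _ _))
    · exact ⟨p, mem_inter.2 ⟨hpA a ha haA', mem_insert_self _ _⟩⟩
  · have := card_insert_le p H
    omega

/-- Two intersecting members are hit by one point and weigh at least `6` in the sum; a member
disjoint from all others is hit by one of its points and contributes at least `3` to both
terms. -/
lemma exists_transversal_six_mul_card_le (A : Finset (Finset α)) (hA : ∀ a ∈ A, 3 ≤ #a) :
    ∃ H ⊆ A.sup id, (∀ a ∈ A, (a ∩ H).Nonempty) ∧ 6 * #H ≤ ∑ a ∈ A, #a + #(A.sup id) := by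
  induction A using Finset.strongInduction with
  | H A ih =>
  obtain rfl | ⟨a, ha⟩ := A.eq_empty_or_nonempty
  · exact ⟨∅, empty_subset _, by simp, by simp⟩
  have hsup : ∀ b ∈ A, b ⊆ A.sup id := fun b hb => le_sup (f := id) hb
  have hsum_a := sum_erase_add _ (fun c => #c) ha
  have hA3 := hA a ha
  by_cases hmeet : ∃ b ∈ A, b ≠ a ∧ (a ∩ b).Nonempty
  · obtain ⟨b, hb, hba, p, hp⟩ := hmeet
    rw [mem_inter] at hp
    have hbA' : b ∈ A.erase a := mem_erase.2 ⟨hba, hb⟩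
    have hsub : (A.erase a).erase b ⊆ A := (erase_subset _ _).trans (erase_subset _ _)
    refine exists_transversal_insert hsub (hsup a ha hp.1) (fun c hc hc' => ?_) ?_
      (ih _ ((erase_ssubset hbA').trans (erase_ssubset ha)) fun c hc => hA c (hsub hc))
    · obtain rfl | rfl : c = b ∨ c = a := by
        by_contra! hne
        exact hc' (mem_erase.2 ⟨hne.1, mem_erase.2 ⟨hne.2, hc⟩⟩)
      exacts [hp.2, hp.1]
    · have := sum_erase_add _ (fun c => #c) hbA'
      have := card_le_card (sup_mono (f := id) hsub)
      have := hA b hb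
      omega
  · push Not at hmeet
    have hdisj : Disjoint a ((A.erase a).sup id) := disjoint_left.2 fun q hqa hq => by
      obtain ⟨c, hc, hqc⟩ := mem_sup.1 hq
      exact ne_empty_of_mem (mem_inter.2 ⟨hqa, hqc⟩)
        (hmeet c (mem_of_mem_erase hc) (ne_of_mem_erase hc))
    have hsup_eq : A.sup id = a ∪ (A.erase a).sup id := by
      rw [← insert_erase ha, sup_insert, erase_insert (notMem_erase a A)]
      rfl
    obtain ⟨p, hpa⟩ : a.Nonempty := card_pos.1 (by omega)
    refine exists_transversal_insert (erase_subset a A) (hsup a ha hpa) (fun c hc hc' => ?_) ?_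
      (ih _ (erase_ssubset ha) fun c hc => hA c (mem_of_mem_erase hc))
    · obtain rfl : c = a := by simpa [hc] using hc'
      exact hpa
    · rw [hsup_eq, card_union_of_disjoint hdisj]
      omega

lemma hasSmallTransversal_of_three_le_card (hAX : ∀ a ∈ A, a ⊆ X)
    (hdeg : ∀ z, degree A z ≤ 2) (hA : ∀ a ∈ A, 3 ≤ #a) : HasSmallTransversal X A := by
  obtain ⟨H, hHsup, hHA, hHcard⟩ := exists_transversal_six_mul_card_le A hA
  have hsupX : A.sup id ⊆ X := Finset.sup_le hAX
  have hsum : ∑ a ∈ A, #a ≤ #X * 2 :=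
    calc ∑ a ∈ A, #a = ∑ a ∈ A, #(X ∩ a) :=
          sum_congr rfl fun a ha => by rw [inter_eq_right.2 (hAX a ha)]
      _ ≤ #X * 2 := sum_card_inter_le fun z _ => hdeg z
  refine ⟨H, hHsup.trans hsupX, hHA, ?_⟩
  have := card_le_card hsupX
  omega

structure PairNbhd (A : Finset (Finset α)) (u v : α) (e a b : Finset α) : Prop where
  e_mem : e ∈ A
  a_mem : a ∈ A
  b_mem : b ∈ A
  e_eq : e = {u, v}
  u_ne_v : u ≠ v
  a_ne : a ≠ e
  b_ne : b ≠ e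
  u_mem : u ∈ a
  v_mem : v ∈ b
  v_notMem : v ∉ a
  u_notMem : u ∉ b

def contractPair (A : Finset (Finset α)) (e a b : Finset α) : Finset (Finset α) :=
  insert ((a ∪ b) \ e) (A \ {e, a, b})

lemma mem_contractPair_of_ne {e a b t : Finset α} (ht : t ∈ A) (hte : t ≠ e) (hta : t ≠ a)
    (htb : t ≠ b) : t ∈ contractPair A e a b :=
  mem_insert_of_mem (mem_sdiff.2 ⟨ht, by simp [hte, hta, htb]⟩)

lemma merge_mem_contractPair (e a b : Finset α) : (a ∪ b) \ e ∈ contractPair A e a b :=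
  mem_insert_self _ _

namespace PairNbhd

variable {u v : α} {e a b : Finset α}

lemma symm (P : PairNbhd A u v e a b) : PairNbhd A v u e b a :=
  ⟨P.e_mem, P.b_mem, P.a_mem, P.e_eq.trans (pair_comm u v), P.u_ne_v.symm, P.b_ne, P.a_ne,
    P.v_mem, P.u_mem, P.u_notMem, P.v_notMem⟩

lemma u_mem_e (P : PairNbhd A u v e a b) : u ∈ e := P.e_eq ▸ mem_insert_self u {v}

lemma a_ne_b (P : PairNbhd A u v e a b) : a ≠ b := fun h => P.v_notMem (h ▸ P.v_mem)

lemma card_e (P : PairNbhd A u v e a b) : #e = 2 := P.e_eq ▸ card_pair P.u_ne_v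

lemma card_a (P : PairNbhd A u v e a b) : #a = #(a \ e) + 1 := by
  have : e ∩ a = {u} := by
    rw [P.e_eq, insert_inter_of_mem P.u_mem, singleton_inter_of_notMem P.v_notMem]
    rfl
  rw [card_sdiff, this, card_singleton]
  have : 0 < #a := card_pos.2 ⟨u, P.u_mem⟩
  omega

lemma sdiff_nonempty (P : PairNbhd A u v e a b) (ha : 2 ≤ #a) : (a \ e).Nonempty :=
  card_pos.1 (by have := P.card_a; omega)

lemma disjoint_of_ne (P : PairNbhd A u v e a b) (hdeg : ∀ z, degree A z ≤ 2) {t : Finset α}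
    (ht : t ∈ A) (hte : t ≠ e) (hta : t ≠ a) (htb : t ≠ b) : Disjoint t e := by
  rw [P.e_eq, disjoint_insert_right, disjoint_singleton_right]
  exact ⟨fun hu => (eq_or_eq_of_degree_le_two (hdeg u) P.e_mem P.a_mem P.a_ne.symm P.u_mem_e
      P.u_mem ht hu).elim hte hta,
    fun hv => (eq_or_eq_of_degree_le_two (hdeg v) P.e_mem P.b_mem P.b_ne.symm P.symm.u_mem_e
      P.v_mem ht hv).elim hte htb⟩

lemma isOddPairCycle_union (P : PairNbhd A u v e a b) (hdeg : ∀ z, degree A z ≤ 2)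
    {K : Finset α} (hKdeg : ∀ z ∈ K, degree A z = 2)
    (hK : ∀ t ∈ A, t ≠ e → t ≠ a → t ≠ b → (t ∩ K).Nonempty → t ⊆ K ∧ #t = 2)
    (hcK : (a ∪ b) \ e ⊆ K) (hKe : Disjoint K e) (ha : #a = 2) (hb : #b = 2) (hodd : Odd #K) :
    IsOddPairCycle A (K ∪ e) := by
  have hab : a ∪ b ⊆ K ∪ e := fun z hz => by
    by_cases hze : z ∈ e
    · exact mem_union_right _ hze
    · exact mem_union_left _ (hcK (mem_sdiff.2 ⟨hz, hze⟩))
  refine ⟨fun t ht hmeet => ?_, fun z hz => ?_, ?_⟩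
  · by_cases hte : t = e
    · subst hte
      exact ⟨subset_union_right, P.card_e⟩
    by_cases hta : t = a
    · subst hta
      exact ⟨subset_union_left.trans hab, ha⟩
    by_cases htb : t = b
    · subst htb
      exact ⟨subset_union_right.trans hab, hb⟩
    rw [inter_union_distrib_left,
      disjoint_iff_inter_eq_empty.1 (P.disjoint_of_ne hdeg ht hte hta htb), union_empty] at hmeet
    exact (hK t ht hte hta htb hmeet).imp_left fun h => h.trans subset_union_left
  · rcases mem_union.1 hz with hzK | hze
    · exact hKdeg z hzK
    rw [P.e_eq, mem_insert, mem_singleton] at hze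
    rcases hze with rfl | rfl
    · exact le_antisymm (hdeg _) (two_le_degree P.e_mem P.a_mem P.a_ne.symm P.u_mem_e P.u_mem)
    · exact le_antisymm (hdeg _)
        (two_le_degree P.e_mem P.b_mem P.b_ne.symm P.symm.u_mem_e P.v_mem)
  · rw [card_union_of_disjoint hKe, P.card_e]
    exact hodd.add_even even_two

/-- Otherwise `e`, `a`, `b` form a triangle of pairs, an odd pair cycle. -/
lemma one_lt_card_merge (P : PairNbhd A u v e a b) (h : IsAdmissible X A) :
    1 < #((a ∪ b) \ e) := by
  by_contra! hc
  obtain ⟨w, hw⟩ := P.sdiff_nonempty (h.two_le_card a P.a_mem)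
  obtain ⟨w', hw'⟩ := P.symm.sdiff_nonempty (h.two_le_card b P.b_mem)
  have hsub_a : a \ e ⊆ (a ∪ b) \ e := sdiff_subset_sdiff subset_union_left le_rfl
  have hsub_b : b \ e ⊆ (a ∪ b) \ e := sdiff_subset_sdiff subset_union_right le_rfl
  have hc1 : (a ∪ b) \ e ⊆ {w} := fun x hx =>
    mem_singleton.2 (card_le_one.1 hc x hx w (hsub_a hw))
  obtain rfl : w' = w := mem_singleton.1 (hc1 (hsub_b hw'))
  rw [mem_sdiff] at hw hw'
  have hcard : ∀ t, t ⊆ a ∪ b → #(t \ e) ≤ 1 := fun t ht =>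
    (card_le_card ((sdiff_subset_sdiff ht le_rfl).trans hc1)).trans (card_singleton w').le
  refine h.not_isOddPairCycle _ (P.isOddPairCycle_union h.degree_le (K := {w'})
    (fun z hz => ?_) (fun t ht hte hta htb hmeet => ?_) hc1
    (disjoint_singleton_left.2 hw.2) ?_ ?_ (by simp))
  · rw [mem_singleton.1 hz]
    exact le_antisymm (h.degree_le w') (two_le_degree P.a_mem P.b_mem P.a_ne_b hw.1 hw'.1)
  · obtain ⟨z, hz⟩ := hmeet
    obtain ⟨hzt, rfl⟩ : z ∈ t ∧ z = w' := by simpa using hz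
    exact ((eq_or_eq_of_degree_le_two (h.degree_le z) P.a_mem P.b_mem P.a_ne_b hw.1 hw'.1 ht
      hzt).elim hta htb).elim
  · have := P.card_a; have := hcard a subset_union_left; have := h.two_le_card a P.a_mem
    omega
  · have := P.symm.card_a; have := hcard b subset_union_right; have := h.two_le_card b P.b_mem
    omega

lemma disjoint_of_mem_contractPair (P : PairNbhd A u v e a b) (hdeg : ∀ z, degree A z ≤ 2)
    {t : Finset α} (ht : t ∈ contractPair A e a b) : Disjoint t e := by
  rcases mem_insert.1 ht with rfl | ht
  · exact sdiff_disjoint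
  · simp only [mem_sdiff, mem_insert, mem_singleton, not_or] at ht
    exact P.disjoint_of_ne hdeg ht.1 ht.2.1 ht.2.2.1 ht.2.2.2

lemma degree_contractPair_le (P : PairNbhd A u v e a b) (hdeg : ∀ z, degree A z ≤ 2) (z : α) :
    degree (contractPair A e a b) z ≤ degree A z := by
  by_cases hze : z ∈ e
  · rw [degree_eq_zero fun t ht hzt =>
      disjoint_left.1 (P.disjoint_of_mem_contractPair hdeg ht) hzt hze]
    exact Nat.zero_le _
  by_cases hzc : z ∈ (a ∪ b) \ e
  · obtain ⟨r, hr, hrR, hzr⟩ : ∃ r ∈ A, r ∈ ({e, a, b} : Finset (Finset α)) ∧ z ∈ r := by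
      rcases mem_union.1 (mem_sdiff.1 hzc).1 with hza | hzb
      · exact ⟨a, P.a_mem, by simp, hza⟩
      · exact ⟨b, P.b_mem, by simp, hzb⟩
    have := degree_insert_le ((a ∪ b) \ e) (A \ {e, a, b}) z
    have := degree_sdiff_lt hr hrR hzr
    unfold contractPair
    omega
  · rw [contractPair, degree_insert_of_notMem _ hzc]
    exact degree_mono sdiff_subset z

lemma disjoint_of_isOddPairCycle_contractPair (P : PairNbhd A u v e a b)
    (hdeg : ∀ z, degree A z ≤ 2) {K : Finset α} (hK : IsOddPairCycle (contractPair A e a b) K) :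
    Disjoint K e := disjoint_left.2 fun z hzK hze => by
  obtain ⟨t, ht, hzt⟩ := exists_mem_of_degree_pos (hK.degree_eq z hzK ▸ two_pos)
  exact disjoint_left.1 (P.disjoint_of_mem_contractPair hdeg ht) hzt hze

lemma degree_eq_of_isOddPairCycle_contractPair (P : PairNbhd A u v e a b)
    (hdeg : ∀ z, degree A z ≤ 2) {K : Finset α} (hK : IsOddPairCycle (contractPair A e a b) K)
    {z : α} (hz : z ∈ K) : degree A z = 2 :=
  le_antisymm (hdeg z) ((hK.degree_eq z hz).symm.le.trans (P.degree_contractPair_le hdeg z))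

lemma isOddPairCycle_of_contractPair (P : PairNbhd A u v e a b) (hdeg : ∀ z, degree A z ≤ 2)
    {K : Finset α} (hK : IsOddPairCycle (contractPair A e a b) K)
    (hcK : ¬ ((a ∪ b) \ e ∩ K).Nonempty) : IsOddPairCycle A K := by
  have hK' : ∀ t ∈ A, (t ∩ K).Nonempty → t ∈ contractPair A e a b := by
    rintro t ht ⟨z, hz⟩
    rw [mem_inter] at hz
    have hze : z ∉ e := disjoint_left.1 (P.disjoint_of_isOddPairCycle_contractPair hdeg hK) hz.2
    refine mem_contractPair_of_ne ht (fun hte => hze (hte ▸ hz.1)) (fun hta => hcK ⟨z, ?_⟩)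
      (fun htb => hcK ⟨z, ?_⟩)
    · exact mem_inter.2 ⟨mem_sdiff.2 ⟨mem_union_left _ (hta ▸ hz.1), hze⟩, hz.2⟩
    · exact mem_inter.2 ⟨mem_sdiff.2 ⟨mem_union_right _ (htb ▸ hz.1), hze⟩, hz.2⟩
  exact ⟨fun t ht h => hK.isPairBlock t (hK' t ht h) h,
    fun _ => P.degree_eq_of_isOddPairCycle_contractPair hdeg hK, hK.odd_card⟩

/-- A point of `a ∩ b` would lie on the merged member only, hence not on `K`; so `a \ e` and
`b \ e` are disjoint singletons filling the pair `(a ∪ b) \ e`, and `a`, `b` are pairs. -/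
lemma isOddPairCycle_union_of_contractPair (P : PairNbhd A u v e a b) (h : IsAdmissible X A)
    {K : Finset α} (hK : IsOddPairCycle (contractPair A e a b) K)
    (hcK : ((a ∪ b) \ e ∩ K).Nonempty) : IsOddPairCycle A (K ∪ e) := by
  obtain ⟨hcK', hc2⟩ := hK.isPairBlock _ (merge_mem_contractPair e a b) hcK
  have hdisj : Disjoint (a \ e) (b \ e) := disjoint_left.2 fun w hwa hwb => by
    rw [mem_sdiff] at hwa hwb
    have h2 := hK.degree_eq w (hcK' (mem_sdiff.2 ⟨mem_union_left _ hwa.1, hwa.2⟩))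
    have h0 : degree (A \ {e, a, b}) w = 0 := degree_eq_zero fun t ht hwt => by
      rw [mem_sdiff] at ht
      rcases eq_or_eq_of_degree_le_two (h.degree_le w) P.a_mem P.b_mem P.a_ne_b hwa.1 hwb.1
        ht.1 hwt with rfl | rfl <;> simp at ht
    have := degree_insert_le ((a ∪ b) \ e) (A \ {e, a, b}) w
    unfold contractPair at h2
    omega
  have hcard : #(a \ e) + #(b \ e) = 2 := by
    rw [← card_union_of_disjoint hdisj, ← union_sdiff_distrib, hc2]
  have := P.card_a
  have := P.symm.card_a
  have := card_pos.2 (P.sdiff_nonempty (h.two_le_card a P.a_mem))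
  have := card_pos.2 (P.symm.sdiff_nonempty (h.two_le_card b P.b_mem))
  exact P.isOddPairCycle_union h.degree_le
    (fun _ => P.degree_eq_of_isOddPairCycle_contractPair h.degree_le hK)
    (fun t ht hte hta htb => hK.isPairBlock t (mem_contractPair_of_ne ht hte hta htb)) hcK'
    (P.disjoint_of_isOddPairCycle_contractPair h.degree_le hK) (by omega) (by omega) hK.odd_card

lemma isAdmissible_contractPair (P : PairNbhd A u v e a b) (h : IsAdmissible X A) :
    IsAdmissible (X \ e) (contractPair A e a b) := by
  refine ⟨fun t ht => subset_sdiff.2 ⟨?_, P.disjoint_of_mem_contractPair h.degree_le ht⟩,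
    fun t ht => ?_, fun z => (P.degree_contractPair_le h.degree_le z).trans (h.degree_le z),
    fun K hK => ?_⟩
  · rcases mem_insert.1 ht with rfl | ht
    · exact sdiff_subset.trans (union_subset (h.subset a P.a_mem) (h.subset b P.b_mem))
    · exact h.subset t (mem_sdiff.1 ht).1
  · rcases mem_insert.1 ht with rfl | ht
    · exact P.one_lt_card_merge h
    · exact h.two_le_card t (mem_sdiff.1 ht).1
  · by_cases hcK : ((a ∪ b) \ e ∩ K).Nonempty
    · exact h.not_isOddPairCycle _ (P.isOddPairCycle_union_of_contractPair h hK hcK)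
    · exact h.not_isOddPairCycle _ (P.isOddPairCycle_of_contractPair h.degree_le hK hcK)

lemma hasSmallTransversal_insert (P : PairNbhd A u v e a b) (h : IsAdmissible X A)
    {H : Finset α} (hHX : H ⊆ X \ e) (hH : ∀ t ∈ A, t ≠ e → t ≠ a → t ≠ b → (t ∩ H).Nonempty)
    (haH : (a ∩ H).Nonempty) (hcard : 2 * #H ≤ #(X \ e)) : HasSmallTransversal X A := by
  have hv : v ∈ e := P.symm.u_mem_e
  have heX := h.subset e P.e_mem
  refine ⟨insert v H, insert_subset (heX hv) (hHX.trans sdiff_subset), fun t ht => ?_, ?_⟩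
  · have hvt : v ∈ t → (t ∩ insert v H).Nonempty := fun hvt =>
      ⟨v, mem_inter.2 ⟨hvt, mem_insert_self _ _⟩⟩
    by_cases hte : t = e
    · exact hvt (hte ▸ hv)
    by_cases hta : t = a
    · exact (hta ▸ haH).mono (inter_subset_inter_left (subset_insert _ _))
    by_cases htb : t = b
    · exact hvt (htb ▸ P.v_mem)
    exact (hH t ht hte hta htb).mono (inter_subset_inter_left (subset_insert _ _))
  · have := card_insert_le v H
    have := card_le_card heX
    rw [card_sdiff_of_subset heX] at hcard
    have := P.card_e
    omega

/-- A transversal of the contraction meets the merged member in `a \ e` or in `b \ e`; adding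
`v`, respectively `u`, covers the other two of `e`, `a`, `b`. -/
lemma hasSmallTransversal_of_contractPair (P : PairNbhd A u v e a b) (h : IsAdmissible X A)
    (ih : HasSmallTransversalBelow α #X) : HasSmallTransversal X A := by
  have heX := h.subset e P.e_mem
  obtain ⟨H, hHX, hHA, hHcard⟩ := ih _ _ (card_lt_card (sdiff_ssubset heX
    (card_pos.1 (by rw [P.card_e]; omega)))) (P.isAdmissible_contractPair h)
  have hH : ∀ t ∈ A, t ≠ e → t ≠ a → t ≠ b → (t ∩ H).Nonempty := fun t ht hte hta htb =>
    hHA t (mem_contractPair_of_ne ht hte hta htb)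
  obtain ⟨p, hp⟩ := hHA _ (merge_mem_contractPair e a b)
  obtain ⟨hpab, hpH⟩ := mem_inter.1 hp
  rcases mem_union.1 (mem_sdiff.1 hpab).1 with hpa | hpb
  · exact P.hasSmallTransversal_insert h hHX hH ⟨p, mem_inter.2 ⟨hpa, hpH⟩⟩ hHcard
  · exact P.symm.hasSmallTransversal_insert h hHX (fun t ht hte htb hta => hH t ht hte hta htb)
      ⟨p, mem_inter.2 ⟨hpb, hpH⟩⟩ hHcard

end PairNbhd

lemma IsAdmissible.hasSmallTransversal_of_pair (h : IsAdmissible X A)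
    (ih : HasSmallTransversalBelow α #X) (hdeg : ∀ z ∈ X, degree A z = 2) {e : Finset α}
    (he : e ∈ A) (he2 : #e = 2) : HasSmallTransversal X A := by
  obtain ⟨u, v, huv, rfl⟩ := card_eq_two.1 he2
  have hu : u ∈ X := h.subset _ he (mem_insert_self u {v})
  have hv : v ∈ X := h.subset _ he (mem_insert_of_mem (mem_singleton_self v))
  obtain ⟨a, ha, hae, hua⟩ := exists_ne_mem_of_two_le_degree (hdeg u hu).ge {u, v}
  obtain ⟨b, hb, hbe, hvb⟩ := exists_ne_mem_of_two_le_degree (hdeg v hv).ge {u, v}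
  by_cases hva : v ∈ a
  · refine h.hasSmallTransversal_of_forall_mem ih hu hv huv fun t ht hvt => ?_
    rcases eq_or_eq_of_degree_le_two (h.degree_le v) he ha hae.symm
      (mem_insert_of_mem (mem_singleton_self v)) hva ht hvt with rfl | rfl
    exacts [mem_insert_self u {v}, hua]
  have hub : u ∉ b := fun hub => (eq_or_eq_of_degree_le_two (h.degree_le u) he ha hae.symm
    (mem_insert_self u {v}) hua hb hub).elim hbe fun hba => hva (hba ▸ hvb)
  exact PairNbhd.hasSmallTransversal_of_contractPair
    ⟨he, ha, hb, rfl, huv, hae, hbe, hua, hvb, hva, hub⟩ h ih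

theorem IsAdmissible.hasSmallTransversal (h : IsAdmissible X A) : HasSmallTransversal X A := by
  induction hn : #X using Nat.strong_induction_on generalizing X A with
  | _ n ih =>
  have ih' : HasSmallTransversalBelow α #X := fun Y B hY hB => ih _ (hn ▸ hY) hB rfl
  by_cases hlow : ∃ z ∈ X, degree A z < 2
  · obtain ⟨z, hz, hdeg⟩ := hlow
    exact h.hasSmallTransversal_of_degree_lt_two ih' hz hdeg
  push Not at hlow
  by_cases hpair : ∃ e ∈ A, #e = 2
  · obtain ⟨e, he, he2⟩ := hpair
    exact h.hasSmallTransversal_of_pair ih'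
      (fun z hz => le_antisymm (h.degree_le z) (hlow z hz)) he he2
  push Not at hpair
  exact hasSmallTransversal_of_three_le_card h.subset h.degree_le fun a ha =>
    lt_of_le_of_ne (h.two_le_card a ha) (hpair a ha).symm

/-- An odd pair cycle outside `K` would enlarge the pair block `K`. -/
lemma isAdmissible_sdiff_of_isPairBlock (hA : ∀ a ∈ A, 2 ≤ #a) (hdeg : ∀ z, degree A z ≤ 2)
    {K : Finset α} (hKX : K ⊆ X) (hK : IsPairBlock A K)
    (hmax : ∀ L ⊆ X, IsPairBlock A L → #L ≤ #K) : IsAdmissible (X \ K) {a ∈ A | a ⊆ X \ K} := by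
  refine ⟨fun a ha => (mem_filter.1 ha).2, fun a ha => hA a (mem_filter.1 ha).1,
    fun z => (degree_mono (filter_subset _ _) z).trans (hdeg z), fun L hL => ?_⟩
  have hLX : L ⊆ X \ K := fun z hz => by
    obtain ⟨a, ha, hza⟩ := exists_mem_of_degree_pos (hL.degree_eq z hz ▸ two_pos)
    exact (mem_filter.1 ha).2 hza
  have := hmax (L ∪ K) (union_subset (hLX.trans sdiff_subset) hKX)
    ((hL.of_filter hdeg).isPairBlock.union hK)
  rw [card_union_of_disjoint (disjoint_of_subset_left hLX sdiff_disjoint)] at this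
  have := hL.odd_card.pos
  omega

theorem exists_subset_forall_sum_le (hAX : ∀ a ∈ A, a ⊆ X) (hA : ∀ a ∈ A, 2 ≤ #a)
    (hdeg : ∀ z, degree A z ≤ 2) :
    ∃ Y ⊆ X, ∀ D ⊆ A, (D : Set (Finset α)).PairwiseDisjoint id → (∀ a ∈ D, a ⊆ Y) →
      #X + 2 * ∑ a ∈ D, (#a - 1) ≤ 2 * #Y := by
  classical
  obtain ⟨K, hK, hmax⟩ := exists_max_image {K ∈ X.powerset | IsPairBlock A K} card
    ⟨∅, mem_filter.2 ⟨empty_mem_powerset X, fun a _ h => by simp at h⟩⟩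
  obtain ⟨hKX, hK⟩ := mem_filter.1 hK
  rw [mem_powerset] at hKX
  obtain ⟨H, hHX, hHA, hHcard⟩ := (isAdmissible_sdiff_of_isPairBlock hA hdeg hKX hK
    fun L hLX hL => hmax L (mem_filter.2 ⟨mem_powerset.2 hLX, hL⟩)).hasSmallTransversal
  refine ⟨X \ H, sdiff_subset, fun D hDA hD hDY => ?_⟩
  have hpair : ∀ a ∈ D, a ⊆ K ∧ #a = 2 := fun a ha => by
    refine hK a (hDA ha) ?_
    by_contra hKa
    obtain ⟨z, hz⟩ := hHA a (mem_filter.2 ⟨hDA ha, fun z hza => mem_sdiff.2 ⟨hAX a (hDA ha) hza,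
      fun hzK => hKa ⟨z, mem_inter.2 ⟨hza, hzK⟩⟩⟩⟩)
    exact (mem_sdiff.1 (hDY a ha (mem_inter.1 hz).1)).2 (mem_inter.1 hz).2
  have hsum : ∑ a ∈ D, (#a - 1) * 2 ≤ #K :=
    calc ∑ a ∈ D, (#a - 1) * 2 = ∑ a ∈ D, #a := sum_congr rfl fun a ha => by
          rw [(hpair a ha).2]
      _ = #(D.biUnion id) := (card_biUnion hD).symm
      _ ≤ #K := card_le_card (biUnion_subset.2 fun a ha => (hpair a ha).1)
  rw [← sum_mul] at hsum
  have hHX' := hHX.trans sdiff_subset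
  rw [card_sdiff_of_subset hKX] at hHcard
  rw [card_sdiff_of_subset hHX']
  have := card_le_card hHX'
  have := card_le_card hKX
  omega

/-- Deleting a point that lies on `r` members of `F` inside `X` loses `r` of them. -/
lemma mul_card_le_of_exists_degree (F : Finset (Finset α)) {r t c : ℕ}
    (hbase : ∀ X : Finset α, #X ≤ t → r * #X ≤ #{g ∈ F | g ⊆ X} + c)
    (hstep : ∀ X : Finset α, t < #X → ∃ z ∈ X, r ≤ degree {g ∈ F | g ⊆ X} z) (X : Finset α) :
    r * #X ≤ #{g ∈ F | g ⊆ X} + c := by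
  induction X using Finset.strongInduction with
  | H X ih =>
  by_cases hX : #X ≤ t
  · exact hbase X hX
  obtain ⟨z, hzX, hz⟩ := hstep X (by omega)
  have hunion : {g ∈ F | g ⊆ X.erase z} ∪ {g ∈ {g ∈ F | g ⊆ X} | z ∈ g} ⊆ {g ∈ F | g ⊆ X} :=
    union_subset (fun g hg => mem_filter.2
      ⟨(mem_filter.1 hg).1, (mem_filter.1 hg).2.trans (erase_subset z X)⟩) (filter_subset _ _)
  have hdisj : Disjoint {g ∈ F | g ⊆ X.erase z} {g ∈ {g ∈ F | g ⊆ X} | z ∈ g} :=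
    disjoint_left.2 fun g hg hg' => notMem_erase z X ((mem_filter.1 hg).2 (mem_filter.1 hg').2)
  have := card_le_card hunion
  rw [card_union_of_disjoint hdisj] at this
  have := ih (X.erase z) (erase_ssubset hzX)
  unfold degree at hz
  rw [← card_erase_add_one hzX, mul_add, mul_one]
  omega

end SetFamily

namespace IsGenerator

open SetFamily

variable {n k : ℕ} {G : Finset (Finset (Fin n))}

lemma exists_partition (hG : IsGenerator n k G) {Y : Finset (Fin n)} (hY : Y.Nonempty) :
    ∃ S ⊆ G, #S ≤ k ∧ (S : Set (Finset (Fin n))).PairwiseDisjoint id ∧ (∀ s ∈ S, s ⊆ Y) ∧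
      #Y = ∑ s ∈ S, #s := by
  obtain ⟨S, hSG, hSk, hS, rfl⟩ := hG.2 Y hY
  exact ⟨S, hSG, hSk, hS, fun s hs => le_sup (f := id) hs, by
    rw [sup_eq_biUnion, card_biUnion (t := id) hS]; rfl⟩

lemma singleton_mem (hG : IsGenerator n k G) (x : Fin n) : {x} ∈ G := by
  obtain ⟨S, hSG, -, -, hSx, hcard⟩ := hG.exists_partition (singleton_nonempty x)
  obtain ⟨s, hs⟩ : S.Nonempty := nonempty_of_ne_empty fun h => by simp [h] at hcard
  rcases subset_singleton_iff.1 (hSx s hs) with rfl | rfl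
  · exact absurd (hG.1 _ (hSG hs)) (by simp)
  · exact hSG hs

lemma le_card_filter_not_two_le (hG : IsGenerator n k G) : n ≤ #{g ∈ G | ¬ 2 ≤ #g} :=
  calc n = #(univ : Finset (Fin n)) := (card_fin n).symm
    _ ≤ _ := card_le_card_of_injOn (fun x => {x})
      (fun x _ => mem_filter.2 ⟨hG.singleton_mem x, by simp⟩)
      (fun x _ y _ h => singleton_injective h)

lemma sum_card_eq_sum_filter_add_card (hG : IsGenerator n k G) {S : Finset (Finset (Fin n))}
    (hSG : S ⊆ G) : ∑ s ∈ S, #s = ∑ s ∈ S with 2 ≤ #s, (#s - 1) + #S := by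
  rw [sum_filter_of_ne (p := fun s => 2 ≤ #s) fun s _ h => by omega, card_eq_sum_ones,
    ← sum_add_distrib]
  exact sum_congr rfl fun s hs => (Nat.sub_add_cancel (card_pos.2 (hG.1 s (hSG hs)))).symm

lemma card_le_card_filter_add_mul (hG : IsGenerator n k G) (m : ℕ) (X : Finset (Fin n)) :
    #X ≤ #{g ∈ {g ∈ G | m < #g} | g ⊆ X} + m * k := by
  suffices hstep : ∀ X : Finset (Fin n), m * k < #X →
      ∃ z ∈ X, 1 ≤ degree {g ∈ {g ∈ G | m < #g} | g ⊆ X} z by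
    simpa using mul_card_le_of_exists_degree _ (fun X (hX : #X ≤ m * k) => by omega) hstep X
  intro X hX
  obtain ⟨S, hSG, hSk, -, hSX, hcard⟩ := hG.exists_partition (card_pos.1 (by omega : 0 < #X))
  obtain ⟨s, hs, hms⟩ : ∃ s ∈ S, m < #s := by
    by_contra! h
    have := (hcard.trans_le (sum_le_card_nsmul S _ m h)).trans (Nat.mul_le_mul_right m hSk)
    rw [mul_comm] at this
    omega
  obtain ⟨z, hz⟩ := hG.1 s (hSG hs)
  exact ⟨z, hSX s hs hz, degree_pos (mem_filter.2 ⟨mem_filter.2 ⟨hSG hs, hms⟩, hSX s hs⟩) hz⟩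

/-- Otherwise the subset `Y` given by `exists_subset_forall_sum_le` for the members of size
`≥ 2` inside `X` needs more than `k` parts. -/
lemma exists_three_le_degree (hG : IsGenerator n k G) {X : Finset (Fin n)} (hX : 2 * k < #X) :
    ∃ z ∈ X, 3 ≤ degree {g ∈ {g ∈ G | 2 ≤ #g} | g ⊆ X} z := by
  by_contra! hdeg
  set B := {g ∈ {g ∈ G | 2 ≤ #g} | g ⊆ X}
  have hBdeg : ∀ z, degree B z ≤ 2 := fun z => by
    by_cases hz : z ∈ X
    · exact Nat.le_of_lt_succ (hdeg z hz)
    · rw [degree_eq_zero fun g (hg : g ∈ B) hzg => hz ((mem_filter.1 hg).2 hzg)]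
      omega
  obtain ⟨Y, hYX, hY⟩ := exists_subset_forall_sum_le (fun g hg => (mem_filter.1 hg).2)
    (fun g hg => (mem_filter.1 (mem_filter.1 hg).1).2) hBdeg
  have hYpos := hY ∅ (empty_subset B) (by simp) (by simp)
  rw [sum_empty] at hYpos
  obtain ⟨S, hSG, hSk, hS, hSY, hcard⟩ :=
    hG.exists_partition (Y := Y) (card_pos.1 (by omega))
  have := hY {s ∈ S | 2 ≤ #s} (fun s hs => mem_filter.2 ⟨mem_filter.2 ⟨hSG (mem_filter.1 hs).1,
    (mem_filter.1 hs).2⟩, (hSY s (mem_filter.1 hs).1).trans hYX⟩)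
    (hS.subset (filter_subset _ _)) (fun s hs => hSY s (mem_filter.1 hs).1)
  rw [hcard, hG.sum_card_eq_sum_filter_add_card hSG] at this
  omega

lemma three_mul_card_le (hG : IsGenerator n k G) (X : Finset (Fin n)) :
    3 * #X ≤ #{g ∈ {g ∈ G | 2 ≤ #g} | g ⊆ X} + 5 * k :=
  mul_card_le_of_exists_degree _ (fun X (hX : #X ≤ 2 * k) => by
    have : #X ≤ #{g ∈ {g ∈ G | 2 ≤ #g} | g ⊆ X} + 1 * k := hG.card_le_card_filter_add_mul 1 X
    omega) (fun _ => hG.exists_three_le_degree) X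

end IsGenerator

theorem stmt14 (n k : ℕ) (h1 : 2 * k < n) (h2 : n ≤ 3 * k)
    (G : Finset (Finset (Fin n))) (hG : IsGenerator n k G) :
    n - 2 * k ≤ (G.filter fun g => 3 ≤ g.card).card ∧
    (n - 2 * k) + ((3 * k - n) + (n - 2 * k) * 3) ≤
      (G.filter fun g => 2 ≤ g.card).card ∧
    (3 * k - n) * 3 + (n - 2 * k) * 7 ≤ G.card := by
  have hfilter : ∀ F : Finset (Finset (Fin n)), {g ∈ F | g ⊆ univ} = F := fun F =>
    filter_true_of_mem fun g _ => subset_univ g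
  have hsize3 : #univ ≤ #{g ∈ {g ∈ G | 3 ≤ #g} | g ⊆ univ} + 2 * k :=
    hG.card_le_card_filter_add_mul 2 univ
  have hsize2 := hG.three_mul_card_le univ
  rw [hfilter, card_univ, Fintype.card_fin] at hsize3 hsize2
  have hsingle := hG.le_card_filter_not_two_le
  have hsplit := card_filter_add_card_filter_not (s := G) fun g => 2 ≤ #g
  exact ⟨by omega, by omega, by omega⟩
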